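/- arXiv:2010.14461 — 11 statements merged into one kernel-verified Lean document; each statement's English description precedes it below -/
import Mathlib

section
/- In any algebra with nullary operations e_1,...,e_n and an (n+1)-ary operation q_n satisfying q_n(e_i, x_1,...,x_n) = x_i for all i ≤ n, if an element c is such that the map f_c(a_1,...,a_n) = q_n(c, a_1,...,a_n) is an n-ary decomposition operator with f_c(e_1,...,e_n) = c, then the congruences θ(c,e_1),...,θ(c,e_n) (each θ(c,e_i) being the smallest congruence identifying c and e_i) form an n-tuple of complementary factor congruences. -/
/-- A congruence of an algebra given by a family of finitary operations `F`. -/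
def IsCong {A : Type*} {ι : Type*} {ar : ι → ℕ}
    (F : (o : ι) → (Fin (ar o) → A) → A) (θ : A → A → Prop) : Prop :=
  Equivalence θ ∧ ∀ (o : ι) (x y : Fin (ar o) → A),
    (∀ i, θ (x i) (y i)) → θ (F o x) (F o y)

/-- `θ` is the smallest congruence identifying `c` and `d`. -/
def IsSmallestCong {A : Type*} {ι : Type*} {ar : ι → ℕ}
    (F : (o : ι) → (Fin (ar o) → A) → A) (θ : A → A → Prop) (c d : A) : Prop :=
  IsCong F θ ∧ θ c d ∧
    ∀ θ' : A → A → Prop, IsCong F θ' → θ' c d → ∀ a b, θ a b → θ' a b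

theorem stmt0 {A : Type*} {ι : Type*} {ar : ι → ℕ}
    (F : (o : ι) → (Fin (ar o) → A) → A)
    (n : ℕ) (e : Fin n → A) (q : A → (Fin n → A) → A)
    -- the `e i` are nullary operations of the algebra
    (ie : Fin n → ι) (he0 : ∀ i, ar (ie i) = 0)
    (he : ∀ (i : Fin n) (x : Fin (ar (ie i)) → A), F (ie i) x = e i)
    -- `q` is an (n+1)-ary operation of the algebra
    (iq : ι) (hq1 : ar iq = n + 1)
    (hqF : ∀ x : Fin (ar iq) → A,
      F iq x = q (x ⟨0, by omega⟩)
        (fun j : Fin n => x ⟨(j : ℕ) + 1, by have := j.isLt; omega⟩))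
    -- the Church identities q(e_i, x₁,...,xₙ) = x_i
    (hChurch : ∀ (i : Fin n) (x : Fin n → A), q (e i) x = x i)
    (c : A)
    -- f_c = q(c, -) is an n-ary decomposition operator
    (hD1 : ∀ x : A, q c (fun _ => x) = x)
    (hD2 : ∀ x : Fin n → Fin n → A,
      q c (fun i => q c (x i)) = q c (fun i => x i i))
    (hD3 : ∀ (o : ι) (m : Fin (ar o) → Fin n → A),
      q c (fun i => F o (fun j => m j i)) = F o (fun j => q c (m j)))
    -- with f_c(e₁,...,eₙ) = c
    (hc : q c e = c)
    -- θ i is the smallest congruence identifying c and e i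
    (θ : Fin n → (A → A → Prop))
    (hθ : ∀ i, IsSmallestCong F (θ i) c (e i)) :
    -- then (θ 1, ..., θ n) is an n-tuple of complementary factor congruences
    (∀ a b : A, (∀ i, θ i a b) → a = b) ∧
      ∀ a : Fin n → A, ∃! u : A, ∀ i, θ i (a i) u := by
  classical
  -- η i a b : "the i-th components of a and b agree"
  set η : Fin n → A → A → Prop :=
    (fun i a b => q c (fun j => if j = i then a else b) = b) with hηdef
  have hηrefl : ∀ i (a : A), η i a a := by
    intro i a
    have : (fun j : Fin n => if j = i then a else a) = fun _ => a := by
      funext j; split <;> rfl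
    simp only [hηdef, this, hD1]
  have hηsymm : ∀ i (a b : A), η i a b → η i b a := by
    intro i a b h
    simp only [hηdef] at h ⊢
    have key := hD2 (fun j => if j = i then (fun k => if k = i then a else b)
      else (fun _ => a))
    have h1 : (fun j : Fin n => q c (if j = i then (fun k => if k = i then a else b)
        else (fun _ => a))) = fun j => if j = i then b else a := by
      funext j
      by_cases hj : j = i <;> simp [hj, h, hD1]
    have h2 : (fun j : Fin n =>
        (if j = i then (fun k => if k = i then a else b) else (fun _ => a)) j)
        = fun _ : Fin n => a := by
      funext j
      by_cases hj : j = i <;> simp [hj]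
    rw [h1, h2, hD1] at key
    exact key
  have hηtrans : ∀ i (a b d : A), η i a b → η i b d → η i a d := by
    intro i a b d h1 h2
    simp only [hηdef] at h1 h2 ⊢
    have key := hD2 (fun j => if j = i then (fun k => if k = i then a else b)
      else (fun k => if k = i then b else d))
    have e1 : (fun j : Fin n => q c (if j = i then (fun k => if k = i then a else b)
        else (fun k => if k = i then b else d))) = fun j => if j = i then b else d := by
      funext j
      by_cases hj : j = i <;> simp [hj, h1, h2]
    have e2 : (fun j : Fin n =>
        (if j = i then (fun k => if k = i then a else b)
          else (fun k => if k = i then b else d)) j)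
        = fun j : Fin n => if j = i then a else d := by
      funext j
      by_cases hj : j = i <;> simp [hj]
    rw [e1, e2, h2] at key
    exact key.symm
  have hηcong : ∀ i, IsCong F (η i) := by
    intro i
    refine ⟨⟨hηrefl i, fun h => hηsymm i _ _ h, fun h1 h2 => hηtrans i _ _ _ h1 h2⟩,
      ?_⟩
    intro o x y hxy
    simp only [hηdef] at hxy ⊢
    have key := hD3 o (fun k => fun j => if j = i then x k else y k)
    have e1 : (fun j : Fin n => F o (fun k => if j = i then x k else y k))
        = fun j : Fin n => if j = i then F o x else F o y := by
      funext j
      by_cases hj : j = i <;> simp [hj]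
    have e2 : (fun k => q c (fun j => if j = i then x k else y k)) = y := by
      funext k; exact hxy k
    rw [e1, e2] at key
    exact key
  have hηce : ∀ i, η i c (e i) := by
    intro i
    simp only [hηdef]
    have key := hD2 (fun j => if j = i then e else (fun _ => e i))
    have e1 : (fun j : Fin n => q c (if j = i then e else (fun _ => e i)))
        = fun j : Fin n => if j = i then c else e i := by
      funext j
      by_cases hj : j = i <;> simp [hj, hc, hD1]
    have e2 : (fun j : Fin n => (if j = i then e else (fun _ => e i)) j)
        = fun _ : Fin n => e i := by
      funext j
      by_cases hj : j = i <;> simp [hj]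
    rw [e1, e2, hD1] at key
    exact key
  -- θ i is contained in η i
  have hθη : ∀ i (a b : A), θ i a b → η i a b := by
    intro i
    exact (hθ i).2.2 (η i) (hηcong i) (hηce i)
  -- intersection of the η i is trivial
  have hint : ∀ a b : A, (∀ i, η i a b) → a = b := by
    intro a b h
    have key := hD2 (fun j => fun k => if k = j then a else b)
    have e1 : (fun j : Fin n => q c (fun k => if k = j then a else b))
        = fun _ : Fin n => b := by
      funext j; exact h j
    simp only [e1, if_pos rfl, hD1] at key
    exact key.symm
  constructor
  · intro a b h
    exact hint a b (fun i => hθη i a b (h i))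
  · intro a
    have hmain : ∀ i, θ i (a i) (q c a) := by
      intro i
      have hcomp := (hθ i).1.2 iq
        (fun k => if h0 : (k : ℕ) = 0 then e i else a ⟨(k : ℕ) - 1, by
          have := k.isLt; omega⟩)
        (fun k => if h0 : (k : ℕ) = 0 then c else a ⟨(k : ℕ) - 1, by
          have := k.isLt; omega⟩)
        (by
          intro k
          by_cases h0 : (k : ℕ) = 0
          · simp only [h0, dif_pos]
            exact (hθ i).1.1.symm (hθ i).2.1
          · simp only [h0, dif_neg, not_false_iff]
            exact (hθ i).1.1.refl _)
      have h1 : F iq (fun k => if h0 : (k : ℕ) = 0 then e i else a ⟨(k : ℕ) - 1, by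
          have := k.isLt; omega⟩) = a i := by
        rw [hqF]
        have hz : ((⟨0, by omega⟩ : Fin (ar iq)) : ℕ) = 0 := rfl
        rw [dif_pos hz]
        have : (fun j : Fin n => if h0 :
            ((⟨(j : ℕ) + 1, by have := j.isLt; omega⟩ : Fin (ar iq)) : ℕ) = 0
            then e i else a ⟨((⟨(j : ℕ) + 1, by have := j.isLt; omega⟩ :
              Fin (ar iq)) : ℕ) - 1, by have := j.isLt; omega⟩) = a := by
          funext j
          rw [dif_neg (by simp)]
          exact congrArg a (Fin.ext (by simp))
        rw [this, hChurch]
      have h2 : F iq (fun k => if h0 : (k : ℕ) = 0 then c else a ⟨(k : ℕ) - 1, by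
          have := k.isLt; omega⟩) = q c a := by
        rw [hqF]
        have hz : ((⟨0, by omega⟩ : Fin (ar iq)) : ℕ) = 0 := rfl
        rw [dif_pos hz]
        have : (fun j : Fin n => if h0 :
            ((⟨(j : ℕ) + 1, by have := j.isLt; omega⟩ : Fin (ar iq)) : ℕ) = 0
            then c else a ⟨((⟨(j : ℕ) + 1, by have := j.isLt; omega⟩ :
              Fin (ar iq)) : ℕ) - 1, by have := j.isLt; omega⟩) = a := by
          funext j
          rw [dif_neg (by simp)]
          exact congrArg a (Fin.ext (by simp))
        rw [this]
      rw [h1, h2] at hcomp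
      exact hcomp
    refine ⟨q c a, hmain, ?_⟩
    intro y hy
    have : ∀ i, η i y (q c a) := by
      intro i
      exact hθη i _ _ ((hθ i).1.1.trans ((hθ i).1.1.symm (hy i)) (hmain i))
    exact hint _ _ this
end

section
/- Let C be a pure clone algebra. If a ∈ C is independent of e_n, e_{n+1}, ..., e_k (for k ≥ n), then q_k(a, b_1,...,b_{n-1}, b_n,...,b_k) = q_{n-1}(a, b_1,...,b_{n-1}) for all elements b_1,...,b_k ∈ C. -/
/-- A pure clone algebra (axioms C1–C5). Here `e i` denotes the constant
`e_{i+1}` of the paper (0-based indexing). -/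
structure PCA (C : Type*) where
  e : ℕ → C
  q : (n : ℕ) → C → (Fin n → C) → C
  c1 : ∀ (n : ℕ) (i : Fin n) (y : Fin n → C), q n (e i) y = y i
  c2 : ∀ (n j : ℕ) (y : Fin n → C), n ≤ j → q n (e j) y = e j
  c3 : ∀ (n : ℕ) (x : C), q n x (fun i => e i) = x
  c4 : ∀ (k n : ℕ) (x : C) (y : Fin k → C), k < n →
    q k x y = q n x (fun i => if h : (i : ℕ) < k then y ⟨i, h⟩ else e i)
  c5 : ∀ (n : ℕ) (x : C) (y z : Fin n → C),
    q n (q n x y) z = q n x (fun i => q n (y i) z)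
/-- `a` is independent of the constant `e_m` of the paper (1-based `m`):
`q_m(a, e_1, ..., e_{m-1}, e_{m+1}) = a`. -/
def Indep {C : Type*} (A : PCA C) (a : C) (m : ℕ) : Prop :=
  A.q m a (fun i => if (i : ℕ) + 1 < m then A.e i else A.e m) = a

/-- `a` has dimension at most `k`: it is independent of `e_m` for every `m > k`. -/
def DimLe {C : Type*} (A : PCA C) (a : C) (k : ℕ) : Prop :=
  ∀ m : ℕ, k < m → Indep A a m

lemma indep_absorb {C : Type*} (A : PCA C) (m : ℕ) (a : C) (h : Indep A a m)
    (c : Fin m → C) :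
    A.q m a c = A.q m a (fun i => if (i : ℕ) + 1 < m then c i else A.e m) := by
  conv_lhs => rw [← h, A.c5]
  congr 1
  funext i
  by_cases hi : (i : ℕ) + 1 < m
  · simp [hi, A.c1]
  · simp [hi, A.c2 m m c le_rfl]

lemma indep_drop {C : Type*} (A : PCA C) (m : ℕ) (hm : 1 ≤ m) (a : C)
    (h : Indep A a m) (b : Fin m → C) :
    A.q m a b = A.q (m - 1) a (fun i => b ⟨i, by omega⟩) := by
  conv_rhs => rw [A.c4 (m - 1) m a _ (by omega), indep_absorb A m a h]
  rw [indep_absorb A m a h b]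
  congr 1
  funext i
  by_cases hi : (i : ℕ) + 1 < m
  · simp [hi, show (i : ℕ) < m - 1 by omega]
  · simp [hi]

theorem stmt4 {C : Type*} (A : PCA C) (n k : ℕ) (hn : 1 ≤ n) (hk : n ≤ k) (a : C)
    (ha : ∀ m : ℕ, n ≤ m → m ≤ k → Indep A a m) (b : Fin k → C) :
    A.q k a b
      = A.q (n - 1) a (fun i => b ⟨i, lt_of_lt_of_le i.isLt (by omega)⟩) := by
  induction k with
  | zero => omega
  | succ k ih =>
    rw [indep_drop A (k + 1) (by omega) a (ha (k + 1) hk le_rfl) b]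
    rcases Nat.lt_or_ge n (k + 1) with h | h
    · exact ih (by omega) (fun m h1 h2 => ha m h1 (by omega)) _
    · have : n = k + 1 := by omega
      subst this
      rfl
end

section
/- Let A be a τ-algebra. The set O_A^(ω) of all functions φ : A^ω → A, equipped with: projections e_i^ω(s) = s_i as nullary constants; q_n^ω(φ, ψ_1,...,ψ_n)(s) = φ(s[ψ_1(s),...,ψ_n(s)]) where s[a_1,...,a_n] replaces the first n coordinates of s by a_1,...,a_n; and σ^ω(ψ_1,...,ψ_n)(s) = σ^A(ψ_1(s),...,ψ_n(s)) for each n-ary σ ∈ τ; is a clone τ-algebra (i.e., satisfies axioms (C1)–(C6)). -/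
/-- The `i`-th projection (the paper's `e_{i+1}^ω`, 0-based indexing):
infinitary operation returning the `i`-th coordinate. -/
def fullE {A : Type*} (i : ℕ) : (ℕ → A) → A := fun s => s i

/-- `substSeq s a` is `s[a_1,...,a_n]`: replace the first `n` coordinates
of `s` by `a`. -/
def substSeq {A : Type*} (s : ℕ → A) {n : ℕ} (a : Fin n → A) : ℕ → A :=
  fun j => if h : j < n then a ⟨j, h⟩ else s j

/-- The operation `q_n^ω` of the full functional clone algebra. -/
def fullQ {A : Type*} (n : ℕ) (φ : (ℕ → A) → A) (ψ : Fin n → (ℕ → A) → A) :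
    (ℕ → A) → A :=
  fun s => φ (substSeq s (fun j => ψ j s))

/-- The pointwise lifting `σ^ω` of a basic operation. -/
def fullOp {A : Type*} {τ : Type*} {ar : τ → ℕ}
    (op : (σ : τ) → (Fin (ar σ) → A) → A)
    (σ : τ) (ψ : Fin (ar σ) → (ℕ → A) → A) : (ℕ → A) → A :=
  fun s => op σ (fun j => ψ j s)

theorem stmt7 {A : Type*} {τ : Type*} {ar : τ → ℕ}
    (op : (σ : τ) → (Fin (ar σ) → A) → A) :
    -- (C1)
    (∀ (n : ℕ) (i : Fin n) (ψ : Fin n → (ℕ → A) → A),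
      fullQ n (fullE i) ψ = ψ i) ∧
    -- (C2)
    (∀ (n j : ℕ) (ψ : Fin n → (ℕ → A) → A), n ≤ j →
      fullQ n (fullE j) ψ = fullE j) ∧
    -- (C3)
    (∀ (n : ℕ) (φ : (ℕ → A) → A), fullQ n φ (fun i => fullE i) = φ) ∧
    -- (C4)
    (∀ (k n : ℕ) (φ : (ℕ → A) → A) (ψ : Fin k → (ℕ → A) → A), k < n →
      fullQ k φ ψ
        = fullQ n φ (fun i => if h : (i : ℕ) < k then ψ ⟨i, h⟩ else fullE i)) ∧
    -- (C5)
    (∀ (n : ℕ) (φ : (ℕ → A) → A) (ψ χ : Fin n → (ℕ → A) → A),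
      fullQ n (fullQ n φ ψ) χ = fullQ n φ (fun i => fullQ n (ψ i) χ)) ∧
    -- (C6)
    (∀ (σ : τ) (ψ : Fin (ar σ) → (ℕ → A) → A) (n : ℕ)
        (χ : Fin n → (ℕ → A) → A),
      fullQ n (fullOp op σ ψ) χ = fullOp op σ (fun j => fullQ n (ψ j) χ)) := by
  refine ⟨?_, ?_, ?_, ?_, ?_, ?_⟩
  · intro n i ψ
    funext s
    simp [fullQ, fullE, substSeq, i.isLt]
  · intro n j ψ h
    funext s
    simp [fullQ, fullE, substSeq, Nat.not_lt.mpr h]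
  · intro n φ
    funext s
    simp only [fullQ, fullE]
    congr 1
    funext j
    simp only [substSeq]
    split <;> rfl
  · intro k n φ ψ h
    funext s
    simp only [fullQ]
    congr 1
    funext j
    simp only [substSeq, fullE]
    by_cases hjk : j < k
    · simp [hjk, lt_trans hjk h]
    · simp only [hjk, dif_neg]
      by_cases hjn : j < n
      · simp [hjn, hjk]; rfl
      · simp [hjn]
  · intro n φ ψ χ
    funext s
    simp only [fullQ]
    congr 1
    funext j
    simp only [substSeq]
    split <;> rfl
  · intro σ ψ n χ
    rfl
end

section
/- Let 2 = {0,1} and define φ : 2^ω → 2 by φ(s) = 0 if the set {i : s_i = 0} is finite, and φ(s) = 1 otherwise. Then φ is zero-dimensional in the full functional clone algebra on 2 (independent of every e_n) but φ is not a constant function, and φ is not the top extension of any finitary operation on 2. -/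
/-- The top extension of a finitary operation. -/
def topExt {A : Type*} {n : ℕ} (f : (Fin n → A) → A) : (ℕ → A) → A :=
  fun s => f (fun i => s i)

open scoped Classical in
/-- `phi s = 0` (i.e. `false`) if `{i : s i = 0}` is finite, `1` otherwise. -/
noncomputable def phi : (ℕ → Bool) → Bool :=
  fun s => if ({i | s i = false} : Set ℕ).Finite then false else true

lemma phi_congr (s t : ℕ → Bool) (m : ℕ) (h : ∀ i, i ≠ m → s i = t i) :
    phi s = phi t := by
  have key : ({i | s i = false} : Set ℕ).Finite ↔ ({i | t i = false} : Set ℕ).Finite := by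
    constructor
    · intro hf
      apply Set.Finite.subset (hf.union (Set.finite_singleton m))
      intro i hi
      by_cases him : i = m
      · exact Or.inr him
      · exact Or.inl (by simpa [Set.mem_setOf_eq, h i him] using hi)
    · intro hf
      apply Set.Finite.subset (hf.union (Set.finite_singleton m))
      intro i hi
      by_cases him : i = m
      · exact Or.inr him
      · exact Or.inl (by simpa [Set.mem_setOf_eq, ← h i him] using hi)
  unfold phi
  by_cases hf : ({i | s i = false} : Set ℕ).Finite
  · rw [if_pos hf, if_pos (key.mp hf)]
  · rw [if_neg hf, if_neg (fun h' => hf (key.mpr h'))]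

theorem stmt9 :
    -- φ is zero-dimensional: independent of every projection e_{m+1}
    (∀ m : ℕ,
      fullQ (m + 1) phi
        (fun i => if (i : ℕ) + 1 < m + 1 then fullE i else fullE (m + 1)) = phi) ∧
    -- φ is not constant
    (¬ ∃ c : Bool, ∀ s : ℕ → Bool, phi s = c) ∧
    -- φ is not the top extension of any finitary operation
    ¬ ∃ (n : ℕ) (f : (Fin n → Bool) → Bool), phi = topExt f := by
  refine ⟨?_, ?_, ?_⟩
  · intro m
    funext s
    apply phi_congr _ _ m
    intro i him
    simp only [fullQ, substSeq, fullE]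
    by_cases hi : i < m + 1
    · have him' : i < m := lt_of_le_of_ne (Nat.lt_succ_iff.mp hi) him
      simp [hi, him', fullE]
    · simp [hi]
  · rintro ⟨c, hc⟩
    have h1 : phi (fun _ => true) = false := by
      simp [phi, Set.finite_empty, show {i : ℕ | (true : Bool) = false} = ∅ from by ext; simp]
    have h2 : phi (fun _ => false) = true := by
      have h : ({i | (fun _ => (false:Bool)) i = false} : Set ℕ) = Set.univ := by ext i; simp
      unfold phi
      rw [h, if_neg Set.infinite_univ]
    rw [hc] at h1 h2
    simp [h1] at h2
  · rintro ⟨n, f, hf⟩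
    have h1 : phi (fun _ => true) = false := by
      simp [phi, show {i : ℕ | (true : Bool) = false} = ∅ from by ext; simp]
    have h2 : phi (fun i => decide (i < n)) = true := by
      have h : ({i | (fun i => decide (i < n)) i = false} : Set ℕ) = {i | n ≤ i} := by
        ext i; simp [Nat.not_lt]
      unfold phi
      rw [h, if_neg (show ¬({i | n ≤ i} : Set ℕ).Finite from Set.Ici_infinite n)]
    rw [hf] at h1 h2
    simp only [topExt] at h1 h2
    have : (fun i : Fin n => (true : Bool)) = (fun i : Fin n => decide ((i:ℕ) < n)) := by
      funext i; simp [i.isLt]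
    rw [this] at h1
    rw [h1] at h2
    exact absurd h2 (by simp)
end

section
/- Let C be a clone algebra and f : C^k → C a function. Then f is C-representable (f(e_1,...,e_k) has dimension ≤ k and f(a) = q_k(f(e_1,...,e_k), a_1,...,a_k) for all a) if and only if f commutes with all substitutions: q_n(f(a_1,...,a_k), c_1,...,c_n) = f(q_n(a_1, c),..., q_n(a_k, c)) for all n ≥ 0, all a ∈ C^k and all c ∈ C^n. -/
/-- `f` is `C`-representable. -/
def Repr' {C : Type*} (A : PCA C) {k : ℕ} (f : (Fin k → C) → C) : Prop :=
  DimLe A (f (fun i => A.e i)) k ∧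
    ∀ a : Fin k → C, f a = A.q k (f (fun i => A.e i)) a

/-- `c4` for `k ≤ n`. -/
lemma c4' {C : Type*} (A : PCA C) (k n : ℕ) (x : C) (y : Fin k → C) (h : k ≤ n) :
    A.q k x y = A.q n x (fun i => if h : (i : ℕ) < k then y ⟨i, h⟩ else A.e i) := by
  rcases lt_or_eq_of_le h with h' | rfl
  · exact A.c4 k n x y h'
  · congr 1; funext i; simp [i.isLt]

/-- If `b` is independent of coordinate `m` (0-based), changing the `m`-th
argument of a substitution into `b` does not change the result. -/
lemma coord_swap {C : Type*} (A : PCA C) (b : C) (m n : ℕ) (hm : Indep A b (m+1))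
    (hn : m < n) (g g' : Fin n → C) (hgg : ∀ i : Fin n, (i : ℕ) ≠ m → g i = g' i) :
    A.q n b g = A.q n b g' := by
  have hb : A.q n b (fun i => if (i : ℕ) = m then A.e (m+1) else A.e i) = b := by
    have h1 : A.q (m+1) b (fun i => if (i : ℕ) + 1 < m + 1 then A.e i else A.e (m+1)) = b := hm
    rw [c4' A (m+1) n b _ hn] at h1
    rw [← h1]; congr 1; funext i
    by_cases hi : (i : ℕ) < m + 1
    · by_cases h2 : (i : ℕ) = m
      · have h3 : ¬ ((i : ℕ) + 1 < m + 1) := by omega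
        simp [hi, h2, h3]
      · have h3 : (i : ℕ) + 1 < m + 1 := by omega
        simp [hi, h2, h3]
    · have h2 : (i : ℕ) ≠ m := by omega
      simp [hi, h2]
  have key : ∀ gg : Fin n → C, A.q n b gg =
      A.q n b (fun i => if (i : ℕ) = m then A.q n (A.e (m+1)) gg else gg i) := by
    intro gg
    conv_lhs => rw [← hb]
    rw [A.c5]
    congr 1; funext i
    by_cases h2 : (i : ℕ) = m
    · simp [h2]
    · simp only [h2, if_false]
      exact A.c1 n i gg
  rw [key g, key g']
  have hv : A.q n (A.e (m+1)) g = A.q n (A.e (m+1)) g' := by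
    by_cases h3 : m + 1 < n
    · rw [A.c1 n ⟨m+1, h3⟩ g, A.c1 n ⟨m+1, h3⟩ g']
      exact hgg ⟨m+1, h3⟩ (by simp)
    · have h4 : n ≤ m + 1 := by omega
      rw [A.c2 n (m+1) g h4, A.c2 n (m+1) g' h4]
  congr 1; funext i
  by_cases h2 : (i : ℕ) = m
  · simp [h2, hv]
  · simp [h2, hgg i h2]

/-- If `b` has dimension at most `k`, then `q n b g` only depends on the
first `k` values of `g`. -/
lemma agree {C : Type*} (A : PCA C) (b : C) (k n : ℕ) (hb : DimLe A b k)
    (g g' : Fin n → C) (h : ∀ i : Fin n, (i : ℕ) < k → g i = g' i) :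
    A.q n b g = A.q n b g' := by
  have key : ∀ j : ℕ, A.q n b (fun i => if (i : ℕ) < j then g' i else g i) = A.q n b g := by
    intro j
    induction j with
    | zero => simp
    | succ j ih =>
      by_cases hjn : j < n
      · by_cases hjk : j < k
        · rw [← ih]; congr 1; funext i
          by_cases h2 : (i : ℕ) < j
          · have h1 : (i : ℕ) < j + 1 := by omega
            simp [h1, h2]
          · by_cases h1 : (i : ℕ) < j + 1
            · have hij : (i : ℕ) = j := by omega
              simp only [h1, if_true, h2, if_false]
              exact (h i (by omega)).symm
            · simp [h1, h2]
        · rw [← ih]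
          refine coord_swap A b j n (hb (j+1) (by omega)) hjn _ _ ?_
          intro i hi
          by_cases h2 : (i : ℕ) < j
          · have h1 : (i : ℕ) < j + 1 := by omega
            simp [h1, h2]
          · have h1 : ¬ ((i : ℕ) < j + 1) := by omega
            simp [h1, h2]
      · rw [← ih]; congr 1; funext i
        have hi := i.isLt
        have h1 : (i : ℕ) < j + 1 := by omega
        have h2 : (i : ℕ) < j := by omega
        simp [h1, h2]
  have hk := key n
  rw [← hk]; congr 1; funext i; simp [i.isLt]

theorem stmt13 {C : Type*} (A : PCA C) {k : ℕ} (f : (Fin k → C) → C) :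
    Repr' A f ↔
      ∀ (n : ℕ) (a : Fin k → C) (c : Fin n → C),
        A.q n (f a) c = f (fun j => A.q n (a j) c) := by
  constructor
  · rintro ⟨hd, hr⟩
    intro n a c
    rw [hr a, hr (fun j => A.q n (a j) c)]
    rcases le_or_gt k n with hkn | hnk
    · rw [c4' A k n _ a hkn, A.c5, c4' A k n _ _ hkn]
      refine agree A _ k n hd _ _ ?_
      intro i hi
      simp [hi]
    · rw [A.c4 n k (A.q k (f fun i => A.e i) a) c hnk, A.c5]
      congr 1; funext i
      rw [A.c4 n k (a i) c hnk]
  · intro H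
    have hb : ∀ a, f a = A.q k (f (fun i => A.e i)) a := by
      intro a
      rw [H k (fun i => A.e i) a]
      congr 1; funext j
      exact (A.c1 k j a).symm
    refine ⟨?_, hb⟩
    intro m hm
    unfold Indep
    rw [H m (fun i => A.e i) _]
    congr 1; funext j
    have hj : (j : ℕ) < m := by omega
    have hc := A.c1 m ⟨j, hj⟩ (fun i => if (i : ℕ) + 1 < m then A.e i else A.e m)
    rw [hc]
    have h2 : (j : ℕ) + 1 < m := by omega
    simp [h2]
end

section
/- Let C be a clone τ-algebra. The set R_C of all C-representable functions is a clone on C: it contains all projections, contains all basic operations σ^C, and is closed under composition. -/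
/-- A clone τ-algebra: a pure clone algebra together with the basic
operations of the type `τ`, satisfying axiom (C6). -/
structure CA (τ : Type*) (ar : τ → ℕ) (C : Type*) extends PCA C where
  op : (σ : τ) → (Fin (ar σ) → C) → C
  c6 : ∀ (σ : τ) (x : Fin (ar σ) → C) (n : ℕ) (y : Fin n → C),
    q n (op σ x) y = op σ (fun j => q n (x j) y)

section Helpers

variable {C : Type*} (A : PCA C)

lemma q_e_lt {n j : ℕ} (h : j < n) (y : Fin n → C) :
    A.q n (A.e j) y = y ⟨j, h⟩ :=
  A.c1 n ⟨j, h⟩ y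

lemma qext {n N : ℕ} (h : n ≤ N) (x : C) (y : Fin n → C) :
    A.q n x y = A.q N x (fun i => if h' : (i : ℕ) < n then y ⟨i, h'⟩ else A.e i) := by
  rcases lt_or_eq_of_le h with hlt | rfl
  · exact A.c4 n N x y hlt
  · congr 1
    funext i
    rw [dif_pos i.isLt]

lemma locality {b : C} {n : ℕ} (hb : DimLe A b n) {N : ℕ} (hnN : n ≤ N)
    (V : Fin N → C) :
    A.q N b V = A.q N b (fun i => if (i : ℕ) < n then V i else A.e N) := by
  suffices H : ∀ t, n ≤ t → t ≤ N →
      A.q N b (fun i => if (i : ℕ) < t then V i else A.e N)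
        = A.q N b (fun i => if (i : ℕ) < n then V i else A.e N) by
    have h1 := H N hnN le_rfl
    have h2 : (fun i : Fin N => if (i : ℕ) < N then V i else A.e N) = V := by
      funext i; rw [if_pos i.isLt]
    rw [h2] at h1
    exact h1
  intro t ht
  induction t, ht using Nat.le_induction with
  | base => intro _; rfl
  | succ t ht ih =>
    intro h1
    rw [← ih (Nat.le_of_succ_le h1)]
    have hind : Indep A b (t + 1) := hb (t + 1) (Nat.lt_succ_of_le ht)
    unfold Indep at hind
    conv_lhs => rw [← hind]
    rw [qext A h1 b (fun i : Fin (t+1) =>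
          if (i : ℕ) + 1 < t + 1 then A.e i else A.e (t+1)), A.c5]
    congr 1
    funext i
    show A.q N (if _h' : (i : ℕ) < t + 1 then
        (if (i : ℕ) + 1 < t + 1 then A.e (i : ℕ) else A.e (t+1)) else A.e (i : ℕ))
        (fun j : Fin N => if (j : ℕ) < t + 1 then V j else A.e N)
      = if (i : ℕ) < t then V i else A.e N
    by_cases hi : (i : ℕ) < t
    · rw [dif_pos (by omega : (i : ℕ) < t + 1), if_pos (by omega : (i : ℕ) + 1 < t + 1),
        q_e_lt A i.isLt]
      show (if (i : ℕ) < t + 1 then V ⟨(i : ℕ), i.isLt⟩ else A.e N)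
          = if (i : ℕ) < t then V i else A.e N
      rw [if_pos (by omega : (i : ℕ) < t + 1), if_pos hi, Fin.eta]
    · rw [if_neg hi]
      by_cases hit : (i : ℕ) = t
      · rw [dif_pos (by omega : (i : ℕ) < t + 1), if_neg (by omega)]
        rcases lt_or_eq_of_le h1 with h2 | h2
        · rw [q_e_lt A h2]
          show (if t + 1 < t + 1 then V ⟨t + 1, h2⟩ else A.e N) = A.e N
          rw [if_neg (lt_irrefl _)]
        · rw [A.c2 N (t+1) _ (le_of_eq h2.symm), h2]
      · rw [dif_neg (by omega : ¬ (i : ℕ) < t + 1), q_e_lt A i.isLt]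
        show (if (i : ℕ) < t + 1 then V ⟨(i : ℕ), i.isLt⟩ else A.e N) = A.e N
        rw [if_neg (by omega)]

lemma locality' {b : C} {n : ℕ} (hb : DimLe A b n) {N : ℕ} (hnN : n ≤ N)
    (V W : Fin N → C) (hVW : ∀ i : Fin N, (i : ℕ) < n → V i = W i) :
    A.q N b V = A.q N b W := by
  rw [locality A hb hnN V, locality A hb hnN W]
  congr 1
  funext i
  by_cases hi : (i : ℕ) < n
  · rw [if_pos hi, if_pos hi, hVW i hi]
  · rw [if_neg hi, if_neg hi]

end Helpers

section Helpers2

variable {C : Type*} {A : PCA C}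

/-- If `b` has dimension ≤ n and each `c j` has dimension ≤ k, then
`q n b c` has dimension ≤ k. -/
lemma rep_dim {n k : ℕ} {b : C} (hb : DimLe A b n) {c : Fin n → C}
    (hc : ∀ j, DimLe A (c j) k) : DimLe A (A.q n b c) k := by
  intro m hm
  unfold Indep
  set M := max n m with hM
  rw [qext A (le_max_right n m) (A.q n b c)
        (fun i : Fin m => if (i : ℕ) + 1 < m then A.e i else A.e m),
      qext A (le_max_left n m) b c, A.c5]
  apply locality' A hb (le_max_left n m)
  intro i hi
  simp only [dif_pos hi]
  rw [← qext A (le_max_right n m) (c ⟨i, hi⟩)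
        (fun i : Fin m => if (i : ℕ) + 1 < m then A.e i else A.e m)]
  exact hc ⟨i, hi⟩ m hm

/-- Composition law for substitution when `b` has dimension ≤ n. -/
lemma rep_comp {n k : ℕ} {b : C} (hb : DimLe A b n) (c : Fin n → C)
    (a : Fin k → C) :
    A.q k (A.q n b c) a = A.q n b (fun j => A.q k (c j) a) := by
  rw [qext A (le_max_right n k) (A.q n b c) a,
      qext A (le_max_left n k) b c, A.c5,
      qext A (le_max_left n k) b (fun j => A.q k (c j) a)]
  apply locality' A hb (le_max_left n k)
  intro i hi
  simp only [dif_pos hi]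
  rw [← qext A (le_max_right n k) (c ⟨i, hi⟩) a]

end Helpers2

theorem stmt14 {τ : Type*} {ar : τ → ℕ} {C : Type*} (A : CA τ ar C) :
    -- R_C contains all projections
    (∀ (n : ℕ) (i : Fin n), Repr' A.toPCA (fun x : Fin n → C => x i)) ∧
    -- R_C contains all basic operations σ^C
    (∀ σ : τ, Repr' A.toPCA (fun x : Fin (ar σ) → C => A.op σ x)) ∧
    -- R_C is closed under composition
    (∀ (n k : ℕ) (f : (Fin n → C) → C) (g : Fin n → (Fin k → C) → C),
      Repr' A.toPCA f → (∀ j, Repr' A.toPCA (g j)) →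
      Repr' A.toPCA (fun x : Fin k → C => f (fun j => g j x))) := by
  refine ⟨?_, ?_, ?_⟩
  · -- projections
    intro n i
    refine ⟨?_, ?_⟩
    · intro m hm
      show A.toPCA.q m (A.toPCA.e i)
          (fun j : Fin m => if (j : ℕ) + 1 < m then A.toPCA.e j else A.toPCA.e m)
          = A.toPCA.e i
      rw [q_e_lt A.toPCA (lt_trans i.isLt hm)]
      show (if (i : ℕ) + 1 < m then A.toPCA.e (i : ℕ) else A.toPCA.e m)
          = A.toPCA.e (i : ℕ)
      rw [if_pos (lt_of_le_of_lt (Nat.succ_le_of_lt i.isLt) hm)]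
    · intro a
      exact (A.toPCA.c1 n i a).symm
  · -- basic operations
    intro σ
    refine ⟨?_, ?_⟩
    · intro m hm
      show A.toPCA.q m (A.op σ (fun j => A.toPCA.e j))
          (fun j : Fin m => if (j : ℕ) + 1 < m then A.toPCA.e j else A.toPCA.e m)
          = A.op σ (fun j => A.toPCA.e j)
      rw [A.c6]
      congr 1
      funext j
      rw [q_e_lt A.toPCA (lt_trans j.isLt hm)]
      show (if (j : ℕ) + 1 < m then A.toPCA.e (j : ℕ) else A.toPCA.e m)
          = A.toPCA.e (j : ℕ)
      rw [if_pos (lt_of_le_of_lt (Nat.succ_le_of_lt j.isLt) hm)]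
    · intro a
      show A.op σ a = A.toPCA.q (ar σ) (A.op σ (fun j => A.toPCA.e j)) a
      rw [A.c6]
      congr 1
      funext j
      rw [q_e_lt A.toPCA j.isLt]
  · -- composition
    intro n k f g hf hg
    have he : (fun x : Fin k → C => f (fun j => g j x)) (fun i => A.toPCA.e i)
        = A.toPCA.q n (f (fun i => A.toPCA.e i))
            (fun j => g j (fun i => A.toPCA.e i)) :=
      hf.2 _
    refine ⟨?_, ?_⟩
    · show DimLe A.toPCA
        ((fun x : Fin k → C => f (fun j => g j x)) (fun i => A.toPCA.e i)) k
      rw [he]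
      exact rep_dim hf.1 (fun j => (hg j).1)
    · intro a
      show f (fun j => g j a)
          = A.toPCA.q k
              ((fun x : Fin k → C => f (fun j => g j x)) (fun i => A.toPCA.e i)) a
      rw [he, rep_comp hf.1]
      rw [hf.2 (fun j => g j a)]
      congr 1
      funext j
      exact (hg j).2 a
end

section
/- Let f : C^n → C and g : C^k → C be C-representable functions in a clone algebra C. Then f and g are similar (one extends the other by fictitious trailing arguments) if and only if f(e_1,...,e_n) = g(e_1,...,e_k). -/
/-- `Extends f g` : `g` is obtained from `f` by adding fictitious trailing
arguments. -/
def Extends {A : Type*} {n k : ℕ} (f : (Fin n → A) → A) (g : (Fin k → A) → A) :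
    Prop :=
  ∃ h : n ≤ k, ∀ x : Fin k → A, g x = f (fun i => x ⟨i, lt_of_lt_of_le i.isLt h⟩)

lemma pca_step {C : Type*} (A : PCA C) (a : C) (k : ℕ) (h : Indep A a (k+1))
    (x : Fin (k+1) → C) :
    A.q (k+1) a x = A.q (k+1) a (fun i => if (i : ℕ) < k then x i else A.e (k+1)) := by
  conv_lhs => rw [← h, A.c5]
  congr 1
  funext i
  by_cases hi : (i : ℕ) < k
  · simp only [hi, if_pos (by omega : (i:ℕ) + 1 < k + 1)]
    exact A.c1 (k+1) i x
  · simp only [hi, if_neg (by omega : ¬ ((i:ℕ) + 1 < k + 1)), if_neg hi]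
    exact A.c2 (k+1) (k+1) x le_rfl

lemma pca_red {C : Type*} (A : PCA C) (a : C) (n : ℕ) (hd : DimLe A a n) :
    ∀ (k : ℕ) (h : n ≤ k) (x : Fin k → C),
      A.q k a x = A.q n a (fun i => x (Fin.castLE h i)) := by
  intro k
  induction k with
  | zero =>
    intro h x
    interval_cases n
    congr 1
  | succ m ih =>
    intro h x
    rcases Nat.lt_or_ge n (m+1) with h' | h'
    · have hn : n ≤ m := Nat.lt_succ_iff.mp h'
      have e1 := pca_step A a m (hd (m+1) (by omega)) x
      have e2 := A.c4 m (m+1) a (fun i => x (Fin.castLE (Nat.le_succ m) i))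
        (Nat.lt_succ_self m)
      have e3 := pca_step A a m (hd (m+1) (by omega))
        (fun i : Fin (m+1) =>
          if hh : (i : ℕ) < m then x (Fin.castLE (Nat.le_succ m) ⟨i, hh⟩) else A.e i)
      have e4 : A.q (m+1) a x = A.q m a (fun i => x (Fin.castLE (Nat.le_succ m) i)) := by
        rw [e1, e2, e3]
        congr 1
        funext i
        by_cases hi : (i : ℕ) < m
        · simp [hi, Fin.castLE]
        · simp [hi]
      rw [e4, ih hn]
      rfl
    · have : n = m + 1 := le_antisymm h h'
      subst this
      rfl

theorem stmt15 {C : Type*} (A : PCA C) {n k : ℕ}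
    (f : (Fin n → C) → C) (g : (Fin k → C) → C)
    (hf : Repr' A f) (hg : Repr' A g) :
    (Extends f g ∨ Extends g f) ↔
      f (fun i => A.e i) = g (fun i => A.e i) := by
  obtain ⟨hfd, hfr⟩ := hf
  obtain ⟨hgd, hgr⟩ := hg
  constructor
  · rintro (⟨h, hx⟩ | ⟨h, hx⟩)
    · exact (hx (fun i => A.e i)).symm
    · exact hx (fun i => A.e i)
  · intro heq
    rcases Nat.le_total n k with h | h
    · left
      refine ⟨h, fun x => ?_⟩
      calc g x = A.q k (g fun i => A.e i) x := hgr x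
        _ = A.q k (f fun i => A.e i) x := by rw [heq]
        _ = A.q n (f fun i => A.e i) (fun i => x (Fin.castLE h i)) :=
            pca_red A _ n hfd k h x
        _ = f (fun i => x ⟨i, lt_of_lt_of_le i.isLt h⟩) := (hfr _).symm
    · right
      refine ⟨h, fun x => ?_⟩
      calc f x = A.q n (f fun i => A.e i) x := hfr x
        _ = A.q n (g fun i => A.e i) x := by rw [heq]
        _ = A.q k (g fun i => A.e i) (fun i => x (Fin.castLE h i)) :=
            pca_red A _ k hgd n h x
        _ = g (fun i => x ⟨i, lt_of_lt_of_le i.isLt h⟩) := (hgr _).symm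
end

section
/- The map r ≡ s iff {i : r_i ≠ s_i} is finite is an equivalence relation on A^ω, and for each r ∈ A^ω the set of functions from the equivalence class A^ω_r of r to A, equipped with e_i^r(s) = s_i and q_n^r(φ, ψ_1,...,ψ_n)(s) = φ(s[ψ_1(s),...,ψ_n(s)]), is a pure clone algebra (satisfies axioms (C1)–(C5)). -/
/-- `r ≡ s` iff they differ in finitely many coordinates. -/
def EqvSeq (A : Type*) (r s : ℕ → A) : Prop := ({i | r i ≠ s i} : Set ℕ).Finite

/-- The equivalence class `A^ω_r` of `r`. -/
def Cls {A : Type*} (r : ℕ → A) := {s : ℕ → A // EqvSeq A r s}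

/-- Replacing the first `n` coordinates of a sequence in `A^ω_r` stays in
`A^ω_r`. -/
def clsSubst {A : Type*} {r : ℕ → A} (s : Cls r) {n : ℕ} (a : Fin n → A) :
    Cls r :=
  ⟨fun j => if h : j < n then a ⟨j, h⟩ else s.1 j, by
    refine Set.Finite.subset ((Set.finite_Iio n).union s.2) ?_
    intro i hi
    simp only [Set.mem_setOf_eq] at hi
    by_cases h : i < n
    · exact Or.inl h
    · refine Or.inr ?_
      simp only [Set.mem_setOf_eq]
      simpa [h] using hi⟩

/-- The projections of the point-relativized functional clone algebra. -/
def clsE {A : Type*} (r : ℕ → A) (i : ℕ) : Cls r → A := fun s => s.1 i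

/-- The operations `q_n^r` of the point-relativized functional clone algebra. -/
def clsQ {A : Type*} (r : ℕ → A) (n : ℕ) (φ : Cls r → A)
    (ψ : Fin n → Cls r → A) : Cls r → A :=
  fun s => φ (clsSubst s (fun j => ψ j s))

theorem stmt16 {A : Type*} (r : ℕ → A) :
    Equivalence (EqvSeq A) ∧
    -- (C1)
    (∀ (n : ℕ) (i : Fin n) (y : Fin n → Cls r → A),
      clsQ r n (clsE r i) y = y i) ∧
    -- (C2)
    (∀ (n j : ℕ) (y : Fin n → Cls r → A), n ≤ j →
      clsQ r n (clsE r j) y = clsE r j) ∧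
    -- (C3)
    (∀ (n : ℕ) (x : Cls r → A), clsQ r n x (fun i => clsE r i) = x) ∧
    -- (C4)
    (∀ (k n : ℕ) (x : Cls r → A) (y : Fin k → Cls r → A), k < n →
      clsQ r k x y
        = clsQ r n x (fun i => if h : (i : ℕ) < k then y ⟨i, h⟩ else clsE r i)) ∧
    -- (C5)
    (∀ (n : ℕ) (x : Cls r → A) (y z : Fin n → Cls r → A),
      clsQ r n (clsQ r n x y) z = clsQ r n x (fun i => clsQ r n (y i) z)) := by

  refine ⟨⟨?_, ?_, ?_⟩, ?_, ?_, ?_, ?_, ?_⟩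
  · intro a; simp [EqvSeq]
  · intro a b h
    exact h.subset (fun i hi => by simpa [ne_comm] using hi)
  · intro a b c h1 h2
    refine (h1.union h2).subset ?_
    intro i hi
    by_cases h : a i = b i
    · exact Or.inr (by simpa [EqvSeq, ← h] using hi)
    · exact Or.inl h
  · intro n i y
    funext s
    simp [clsQ, clsE, clsSubst, i.2]
  · intro n j y h
    funext s
    simp [clsQ, clsE, clsSubst, Nat.not_lt.mpr h]
  · intro n x
    funext s
    simp only [clsQ, clsE]
    congr 1
    apply Subtype.ext
    funext j
    simp only [clsSubst]
    split <;> rfl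
  · intro k n x y hkn
    funext s
    simp only [clsQ, clsE]
    congr 1
    apply Subtype.ext
    funext j
    simp only [clsSubst]
    by_cases h1 : j < k
    · simp [h1, h1.trans hkn]
    · by_cases h2 : j < n <;> simp [h1, h2, clsE]
  · intro n x y z
    funext s
    simp only [clsQ]
    congr 1
    apply Subtype.ext
    funext j
    simp only [clsSubst]
    split <;> rfl
end

section
/- Let C be a clone τ-algebra. If c ∈ C is n-central for some n (the map (a_1,...,a_n) ↦ q_n(c, a_1,...,a_n) is an n-ary decomposition operator sending (e_1,...,e_n) to c), then c has finite dimension at most n; that is, q_m(c, e_1,...,e_{m-1}, e_{m+1}) = c for every m > n. -/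
/-- `c` is `n`-central: the map `f_c = q_n(c, -)` is an `n`-ary decomposition
operator (idempotent, associative in the matrix sense, and a homomorphism from
`C^n` to `C` with respect to all the operations of the clone τ-algebra) with
`f_c(e_1, ..., e_n) = c`. -/
def IsCentral {τ : Type*} {ar : τ → ℕ} {C : Type*} (A : CA τ ar C)
    (n : ℕ) (c : C) : Prop :=
  -- (D1)
  (∀ x : C, A.q n c (fun _ => x) = x) ∧
  -- (D2)
  (∀ x : Fin n → Fin n → C,
    A.q n c (fun i => A.q n c (x i)) = A.q n c (fun i => x i i)) ∧
  -- (D3): homomorphism with respect to the basic operations,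
  (∀ (σ : τ) (m : Fin (ar σ) → Fin n → C),
    A.q n c (fun i => A.op σ (fun j => m j i)) = A.op σ (fun j => A.q n c (m j))) ∧
  -- the operators q_k,
  (∀ (k : ℕ) (x : Fin n → C) (y : Fin k → Fin n → C),
    A.q n c (fun i => A.q k (x i) (fun j => y j i))
      = A.q k (A.q n c x) (fun j => A.q n c (y j))) ∧
  -- and the constants e_j;
  (∀ j : ℕ, A.q n c (fun _ => A.e j) = A.e j) ∧
  -- f_c(e_1, ..., e_n) = c
  A.q n c (fun i => A.e i) = c

theorem stmt17 {τ : Type*} {ar : τ → ℕ} {C : Type*} (A : CA τ ar C)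
    (n : ℕ) (c : C) (hc : IsCentral A n c) :
    ∀ m : ℕ, n < m → Indep A.toPCA c m := by
  intro m hm
  obtain ⟨h1, h2, h3, h4, h5, h6⟩ := hc
  unfold Indep
  set Y : Fin m → C := fun i => if (i : ℕ) + 1 < m then A.e i else A.e m with hY
  have key := h4 m (fun i => A.e i) (fun j _ => Y j)
  have lhs : (fun i : Fin n => A.q m (A.e i) (fun j => Y j)) = fun i : Fin n => A.e i := by
    funext i
    have hi : (i : ℕ) < m := lt_trans i.isLt hm
    have := A.c1 m ⟨i, hi⟩ Y
    simp only [Fin.val_mk] at this ⊢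
    rw [this, hY]
    simp only [Fin.val_mk]
    rw [if_pos (by omega)]
  rw [lhs, h6] at key
  have rhs : (fun j : Fin m => A.q n c (fun _ => Y j)) = Y := by
    funext j; exact h1 (Y j)
  rw [rhs] at key
  exact key.symm
end

section
/- Let C be a clone τ-algebra and c ∈ C an n-central element. Then for every m ≥ n, c is m-central: the map (a_1,...,a_m) ↦ q_m(c, a_1,...,a_m) is an m-ary decomposition operator sending (e_1,...,e_m) to c. -/
theorem stmt18 {τ : Type*} {ar : τ → ℕ} {C : Type*} (A : CA τ ar C)
    (n : ℕ) (c : C) (hc : IsCentral A n c) :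
    ∀ m : ℕ, n ≤ m → IsCentral A m c := by
  obtain ⟨d1, d2, d3, d4, d5, d6⟩ := hc
  intro m hm
  have key : ∀ y : Fin m → C, A.q m c y = A.q n c (fun i => y (Fin.castLE hm i)) := by
    intro y
    have h := d4 m (fun i => A.e i) (fun j _ => y j)
    simp only [d1] at h
    rw [d6] at h
    rw [← h]
    congr 1
    funext i
    exact A.c1 m (Fin.castLE hm i) y
  refine ⟨?_, ?_, ?_, ?_, ?_, ?_⟩
  · intro x; rw [key]; exact d1 x
  · intro x
    simp only [key]
    exact d2 (fun i j => x (Fin.castLE hm i) (Fin.castLE hm j))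
  · intro σ mm
    simp only [key]
    exact d3 σ (fun j i => mm j (Fin.castLE hm i))
  · intro k x y
    simp only [key]
    exact d4 k (fun i => x (Fin.castLE hm i)) (fun j i => y j (Fin.castLE hm i))
  · intro j; rw [key]; exact d5 j
  · rw [key]; exact d6
end

section
/- Let C be a clone τ-algebra and C_0 its pure reduct (the same set with only the operations q_n and constants e_i). An equivalence relation θ on C is a congruence of C (preserved by all operations including the basic operations σ^C for σ ∈ τ) if and only if θ is a congruence of the pure reduct C_0 (preserved by all q_n and trivially by the constants e_i). -/
theorem stmt19 {τ : Type*} {ar : τ → ℕ} {C : Type*} (A : CA τ ar C)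
    (θ : C → C → Prop) (hE : Equivalence θ) :
    -- θ is a congruence of the clone τ-algebra (compatible with the q's and
    -- with the basic operations)
    ((∀ (n : ℕ) (a b : C) (x y : Fin n → C), θ a b → (∀ i, θ (x i) (y i)) →
        θ (A.q n a x) (A.q n b y)) ∧
      (∀ (σ : τ) (x y : Fin (ar σ) → C), (∀ i, θ (x i) (y i)) →
        θ (A.op σ x) (A.op σ y)))
      ↔
    -- iff θ is a congruence of the pure reduct
    (∀ (n : ℕ) (a b : C) (x y : Fin n → C), θ a b → (∀ i, θ (x i) (y i)) →
      θ (A.q n a x) (A.q n b y)) := by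
  constructor
  · exact fun h => h.1
  · intro hq
    refine ⟨hq, fun σ x y hxy => ?_⟩
    have key : ∀ z : Fin (ar σ) → C,
        A.op σ z = A.q (ar σ) (A.op σ (fun i => A.e i)) z := by
      intro z
      rw [A.c6]
      congr 1
      funext j
      rw [A.c1]
    rw [key x, key y]
    exact hq _ _ _ _ _ (hE.refl _) hxy
end
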